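/- The unique connected graph of the tetrahedral model with two bubbles maximizing the number of faces is G_2, the graph in which corresponding vertices of the two bubbles are joined by four color-0 edges so that all six faces have length 2; it has F(G_2) = 6 faces. -/

import Mathlib

/-!  A combinatorial model of the Feynman graphs of the rank-3 tetrahedral
(`O(N)^3`) tensor model.

A graph consists of a finite set `B` of bubbles (copies of the tetrahedron
`K_4`); each bubble has four vertices, so the vertex set is `B × Fin 4`.
Inside every bubble the edges of colors `1,2,3` are given once and for all by
the three fixed-point-free involutions of `Fin 4` (the proper 3-edge-coloring
of `K_4`).  The color-0 propagator edges, one per vertex, are encoded by a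
fixed-point-free involution `pairing` of the vertex set. -/

open Equiv

/-- The color-`c` (for `c ∈ {1,2,3}`, here `c : Fin 3`) perfect matching on the
four vertices of a tetrahedral bubble. -/
def bubblePerm : Fin 3 → Equiv.Perm (Fin 4) :=
  ![Equiv.swap 0 1 * Equiv.swap 2 3,
    Equiv.swap 0 2 * Equiv.swap 1 3,
    Equiv.swap 0 3 * Equiv.swap 1 2]

/-- A Feynman graph of the tetrahedral tensor model: a finite set of `K_4`
bubbles together with a fixed-point-free involution of the vertex set
describing the color-0 edges. -/
structure TGraph where
  B : Type
  [fintypeB : Fintype B]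
  [decB : DecidableEq B]
  pairing : Equiv.Perm (B × Fin 4)
  invol : ∀ v, pairing (pairing v) = v
  fixfree : ∀ v, pairing v ≠ v

attribute [instance] TGraph.fintypeB TGraph.decB

namespace TGraph

/-- The vertex set of a graph. -/
abbrev V (G : TGraph) : Type := G.B × Fin 4

/-- The permutation of the vertices given by the color-`c` edges inside the
bubbles. -/
def colPerm (G : TGraph) (c : Fin 3) : Equiv.Perm G.V :=
  (Equiv.refl G.B).prodCongr (bubblePerm c)

/-- The number of bubbles of a graph. -/
def b (G : TGraph) : ℕ := Fintype.card G.B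

/-- The subgroup of permutations of the vertices generated by the color-0
pairing and the color-`c` matching: its orbits are exactly the faces of
color `c` (cycles alternating colors `0` and `c`). -/
def faceGroup (G : TGraph) (c : Fin 3) : Subgroup (Equiv.Perm G.V) :=
  Subgroup.closure {G.pairing, G.colPerm c}

/-- Two vertices lie on the same face of color `c`. -/
def sameFace (G : TGraph) (c : Fin 3) (u v : G.V) : Prop :=
  u ∈ MulAction.orbit (G.faceGroup c) v

/-- The number of faces of color `c` of the graph. -/
noncomputable def numFaces (G : TGraph) (c : Fin 3) : ℕ :=
  Nat.card (MulAction.orbitRel.Quotient (G.faceGroup c) G.V)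

/-- The total number of faces of the graph. -/
noncomputable def F (G : TGraph) : ℕ := ∑ c : Fin 3, G.numFaces c

/-- The length of the face of color `c` through the vertex `v` (a face of
length `n` consists of `n` color-0 edges and `n` color-`c` edges, hence `2n`
vertices). -/
noncomputable def faceLength (G : TGraph) (c : Fin 3) (v : G.V) : ℕ :=
  Nat.card (MulAction.orbit (G.faceGroup c) v) / 2

/-- The subgroup generated by all edges of the graph. -/
def fullGroup (G : TGraph) : Subgroup (Equiv.Perm G.V) :=
  Subgroup.closure ({G.pairing} ∪ Set.range G.colPerm)

/-- A graph is connected if any vertex can be reached from any other one along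
its edges. -/
def Connected (G : TGraph) : Prop :=
  ∀ u v : G.V, u ∈ MulAction.orbit G.fullGroup v

/-- One step along an edge of the graph avoiding the color-0 edges whose
endpoints belong to `S`. -/
def stepAvoiding (G : TGraph) (S : Set G.V) (u v : G.V) : Prop :=
  (∃ c, v = G.colPerm c u) ∨ (v = G.pairing u ∧ u ∉ S ∧ v ∉ S)

/-- Reachability in the graph with the color-0 edges meeting `S` removed. -/
def reachAvoiding (G : TGraph) (S : Set G.V) : G.V → G.V → Prop :=
  Relation.ReflTransGen (G.stepAvoiding S)

/-- The pair of color-0 edges through the vertices `u` and `w` disconnects the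
graph when removed.  Together with the requirement that the two edges be
distinct, this is the notion of a 2-edge-cut of color-0 edges. -/
def CutDisconnects (G : TGraph) (u w : G.V) : Prop :=
  ¬ ∀ x y : G.V, G.reachAvoiding {u, G.pairing u, w, G.pairing w} x y

/-- Two vertices are connected by a 2-point function if they are joined by a
color-0 edge, or if their two (distinct) color-0 edges form a 2-edge-cut. -/
def TwoPoint (G : TGraph) (x y : G.V) : Prop :=
  G.pairing x = y ∨ (y ≠ x ∧ y ≠ G.pairing x ∧ G.CutDisconnects x y)

/-- The flip of the two color-0 edges `{u, pairing u}` and `{w, pairing w}`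
(assumed distinct) which reconnects `u` with `w` (and `pairing u` with
`pairing w`): the pairing is conjugated by the transposition exchanging
`pairing u` and `w`.  The other flip of this pair of edges is
`G.flip u (G.pairing w)`. -/
def flip (G : TGraph) (u w : G.V) : TGraph where
  B := G.B
  pairing := Equiv.swap (G.pairing u) w * G.pairing * Equiv.swap (G.pairing u) w
  invol := by
    intro v
    simp only [Equiv.Perm.mul_apply, Equiv.swap_apply_self, G.invol]
  fixfree := by
    intro v h
    simp only [Equiv.Perm.mul_apply] at h
    have h' : G.pairing (Equiv.swap (G.pairing u) w v) = Equiv.swap (G.pairing u) w v := by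
      have := congrArg (Equiv.swap (G.pairing u) w) h
      simpa using this
    exact G.fixfree _ h'

/-- The face of color `c` through the color-0 edge `{v, pairing v}` has
length 2 (it consists of this edge, a color-`c` edge, a second color-0 edge
and a second color-`c` edge closing the cycle). -/
def FaceLen2 (G : TGraph) (c : Fin 3) (v : G.V) : Prop :=
  G.pairing v ≠ G.colPerm c v ∧
    G.pairing (G.colPerm c (G.pairing v)) = G.colPerm c v

/-- A proper face of length 2 of color `c` through `v`: a face of length 2
whose two color-0 edges connect two distinct bubbles. -/
def ProperFace2 (G : TGraph) (c : Fin 3) (v : G.V) : Prop :=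
  G.FaceLen2 c v ∧ (G.pairing v).1 ≠ v.1

/-- A graph maximizes the number of faces if it is connected and no connected
graph with the same number of bubbles has more faces. -/
def MaximizesFaces (G : TGraph) : Prop :=
  G.Connected ∧ ∀ H : TGraph, H.Connected → H.b = G.b → H.F ≤ G.F

/-- Isomorphisms of graphs: bijections of the vertex sets commuting with the
color-0 pairing and with the colored matchings inside the bubbles. -/
structure Iso (G H : TGraph) where
  toEquiv : G.V ≃ H.V
  map_pairing : ∀ v, toEquiv (G.pairing v) = H.pairing (toEquiv v)
  map_col : ∀ c v, toEquiv (G.colPerm c v) = H.colPerm c (toEquiv v)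

/-- Two graphs are isomorphic. -/
def IsIso (G H : TGraph) : Prop := Nonempty (Iso G H)

end TGraph

open TGraph

/-- The leading-order two-bubble graph `G_2`: two tetrahedral bubbles with
corresponding vertices joined by four color-0 edges, so that all six faces
have length 2. -/
def G2 : TGraph where
  B := Fin 2
  pairing := (Equiv.swap (0 : Fin 2) 1).prodCongr (Equiv.refl (Fin 4))
  invol := by
    rintro ⟨i, k⟩
    simp [Equiv.prodCongr_apply, Equiv.swap_apply_self]
  fixfree := by
    rintro ⟨i, k⟩ h
    have hi : Equiv.swap (0 : Fin 2) 1 i = i := congrArg Prod.fst h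
    fin_cases i <;> simp_all

/-- The double tadpole `G_1^{(c)}`: one tetrahedral bubble whose two color-0
edges each join two vertices already adjacent by an edge of color `c`. -/
def G1 (c : Fin 3) : TGraph where
  B := Fin 1
  pairing := (Equiv.refl (Fin 1)).prodCongr (bubblePerm c)
  invol := by
    rintro ⟨i, k⟩
    have hk : ∀ j : Fin 4, bubblePerm c (bubblePerm c j) = j := by
      fin_cases c <;> decide
    simp [Equiv.prodCongr_apply, hk]
  fixfree := by
    rintro ⟨i, k⟩ h
    have hk : bubblePerm c k = k := congrArg Prod.snd h
    have hne : ∀ j : Fin 4, bubblePerm c j ≠ j := by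
      fin_cases c <;> decide
    exact hne k hk

namespace TGraph

variable (H K : TGraph)

/-- The image of a vertex of `H` in the glued graph. -/
def inlV (x : H.V) : (H.B ⊕ K.B) × Fin 4 := (Sum.inl x.1, x.2)

/-- The image of a vertex of `K` in the glued graph. -/
def inrV (y : K.V) : (H.B ⊕ K.B) × Fin 4 := (Sum.inr y.1, y.2)

/-- The underlying function of the pairing of the graph obtained by gluing `H`
and `K` along the color-0 edges `{p, H.pairing p}` and `{q, K.pairing q}`:
these two edges are cut and the half-edges are reglued as `p — q` and
`H.pairing p — K.pairing q`.  The new pair of edges is a 2-edge-cut of the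
resulting graph when `H` and `K` are connected. -/
def glueFun (p : H.V) (q : K.V) : (H.B ⊕ K.B) × Fin 4 → (H.B ⊕ K.B) × Fin 4 :=
  fun z =>
    match z with
    | (Sum.inl u, k) =>
        if (u, k) = p then inrV H K q
        else if (u, k) = H.pairing p then inrV H K (K.pairing q)
        else inlV H K (H.pairing (u, k))
    | (Sum.inr u, k) =>
        if (u, k) = q then inlV H K p
        else if (u, k) = K.pairing q then inlV H K (H.pairing p)
        else inrV H K (K.pairing (u, k))

theorem glueFun_inlV (p : H.V) (q : K.V) (x : H.V) :
    glueFun H K p q (inlV H K x) =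
      if x = p then inrV H K q
      else if x = H.pairing p then inrV H K (K.pairing q)
      else inlV H K (H.pairing x) := by
  cases x
  rfl

theorem glueFun_inrV (p : H.V) (q : K.V) (y : K.V) :
    glueFun H K p q (inrV H K y) =
      if y = q then inlV H K p
      else if y = K.pairing q then inlV H K (H.pairing p)
      else inrV H K (K.pairing y) := by
  cases y
  rfl

theorem inlV_injective : Function.Injective (inlV H K) := by
  rintro ⟨u, k⟩ ⟨u', k'⟩ h
  have h1 : (Sum.inl u : H.B ⊕ K.B) = Sum.inl u' := congrArg Prod.fst h
  have h2 : k = k' := congrArg Prod.snd h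
  exact Prod.ext (Sum.inl_injective h1) h2

theorem inrV_injective : Function.Injective (inrV H K) := by
  rintro ⟨u, k⟩ ⟨u', k'⟩ h
  have h1 : (Sum.inr u : H.B ⊕ K.B) = Sum.inr u' := congrArg Prod.fst h
  have h2 : k = k' := congrArg Prod.snd h
  exact Prod.ext (Sum.inr_injective h1) h2

theorem inlV_ne_inrV (x : H.V) (y : K.V) : inlV H K x ≠ inrV H K y := by
  intro h
  exact Sum.inl_ne_inr (congrArg Prod.fst h)

theorem glueFun_invol_inl (p : H.V) (q : K.V) (x : H.V) :
    glueFun H K p q (glueFun H K p q (inlV H K x)) = inlV H K x := by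
  rw [glueFun_inlV]
  by_cases h1 : x = p
  · rw [if_pos h1, glueFun_inrV, if_pos rfl, h1]
  · by_cases h2 : x = H.pairing p
    · rw [if_neg h1, if_pos h2, glueFun_inrV,
        if_neg (fun h => K.fixfree q h), if_pos rfl, h2]
    · have hne1 : H.pairing x ≠ p := by
        intro h; apply h2
        have := congrArg H.pairing h
        rw [H.invol] at this; exact this
      have hne2 : H.pairing x ≠ H.pairing p := fun h => h1 (H.pairing.injective h)
      rw [if_neg h1, if_neg h2, glueFun_inlV, if_neg hne1, if_neg hne2, H.invol]

theorem glueFun_invol_inr (p : H.V) (q : K.V) (y : K.V) :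
    glueFun H K p q (glueFun H K p q (inrV H K y)) = inrV H K y := by
  rw [glueFun_inrV]
  by_cases h1 : y = q
  · rw [if_pos h1, glueFun_inlV, if_pos rfl, h1]
  · by_cases h2 : y = K.pairing q
    · rw [if_neg h1, if_pos h2, glueFun_inlV,
        if_neg (fun h => H.fixfree p h), if_pos rfl, h2]
    · have hne1 : K.pairing y ≠ q := by
        intro h; apply h2
        have := congrArg K.pairing h
        rw [K.invol] at this; exact this
      have hne2 : K.pairing y ≠ K.pairing q := fun h => h1 (K.pairing.injective h)
      rw [if_neg h1, if_neg h2, glueFun_inrV, if_neg hne1, if_neg hne2, K.invol]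

theorem glueFun_involutive (p : H.V) (q : K.V) :
    Function.Involutive (glueFun H K p q) := by
  rintro ⟨(u | u), k⟩
  · exact glueFun_invol_inl H K p q (u, k)
  · exact glueFun_invol_inr H K p q (u, k)

theorem glueFun_fixfree (p : H.V) (q : K.V) :
    ∀ z, glueFun H K p q z ≠ z := by
  have hl : ∀ x : H.V, glueFun H K p q (inlV H K x) ≠ inlV H K x := by
    intro x h
    rw [glueFun_inlV] at h
    by_cases h1 : x = p
    · rw [if_pos h1] at h
      exact inlV_ne_inrV H K x q h.symm
    · by_cases h2 : x = H.pairing p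
      · rw [if_neg h1, if_pos h2] at h
        exact inlV_ne_inrV H K x (K.pairing q) h.symm
      · rw [if_neg h1, if_neg h2] at h
        exact H.fixfree x (inlV_injective H K h)
  have hr : ∀ y : K.V, glueFun H K p q (inrV H K y) ≠ inrV H K y := by
    intro y h
    rw [glueFun_inrV] at h
    by_cases h1 : y = q
    · rw [if_pos h1] at h
      exact inlV_ne_inrV H K p y h
    · by_cases h2 : y = K.pairing q
      · rw [if_neg h1, if_pos h2] at h
        exact inlV_ne_inrV H K (H.pairing p) y h
      · rw [if_neg h1, if_neg h2] at h
        exact K.fixfree y (inrV_injective H K h)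
  rintro ⟨(u | u), k⟩
  · exact hl (u, k)
  · exact hr (u, k)

/-- Gluing two graphs along a pair of color-0 edges.  When `H` and `K` are
connected, the two new color-0 edges form a 2-edge-cut of the glued graph, and
conversely every connected graph with a color-0 2-edge-cut arises this way
from the two closed graphs obtained by cutting the two edges and closing each
side. -/
def glue (p : H.V) (q : K.V) : TGraph where
  B := H.B ⊕ K.B
  pairing := (glueFun_involutive H K p q).toPerm
  invol := fun v => glueFun_involutive H K p q v
  fixfree := fun v => glueFun_fixfree H K p q v

/-- Insertion of a melonic dipole (the 2-point graph obtained by cutting one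
color-0 edge of `G_2`) on the color-0 edge `{v, G.pairing v}` of `G`. -/
def insertDipole (G : TGraph) (v : G.V) : TGraph :=
  glue G G2 v ((0 : Fin 2), (0 : Fin 4))

end TGraph

open TGraph

/-- Melonic graphs (up to isomorphism): `G_2` is melonic, and inserting a
melonic dipole on any color-0 edge of a melonic graph yields a melonic
graph. -/
inductive IsMelonic : TGraph → Prop
  | base {G : TGraph} (h : IsIso G G2) : IsMelonic G
  | insert {G : TGraph} (hG : IsMelonic G) (v : G.V) {H : TGraph}
      (h : IsIso H (G.insertDipole v)) : IsMelonic H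

/-- Double tadpoles decorated with melonic 2-point functions (up to
isomorphism): these are exactly the graphs obtained from one of the double
tadpoles `G_1^{(c)}` by repeatedly inserting melonic dipoles on color-0 edges,
i.e. double tadpoles whose two color-0 edges are replaced by melonic 2-point
functions. -/
inductive IsDecoratedTadpole : TGraph → Prop
  | base {G : TGraph} (c : Fin 3) (h : IsIso G (G1 c)) : IsDecoratedTadpole G
  | insert {G : TGraph} (hG : IsDecoratedTadpole G) (v : G.V) {H : TGraph}
      (h : IsIso H (G.insertDipole v)) : IsDecoratedTadpole H

/-!
A face of color `c` is an orbit of the group generated by the pairing and the color-`c`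
matching. It has two vertices when it has length 1 and at least four otherwise, so counting
vertices bounds the number of faces.

If no color-0 edge stays inside a bubble, no face has length 1: each color has at most `b`
faces, so `F ≤ 3b`, and equality forces every face to have length 2, i.e. the pairing commutes
with every matching. With two bubbles this makes the graph `G_2`.

If a color-0 edge stays inside a bubble, where it is an edge of some color `c₀`, connectivity
forces such an edge, of color `c₁` say, in the other bubble as well. For `c ≠ c₀` the face of
color `c` through the first edge contains its whole bubble and leaves it; counting then gives
at most `1 + [c = c₀] + [c = c₁]` faces of color `c`, so `F ≤ 5`.
-/

theorem Equiv.Perm.orbit_closure_subset {α : Type*} {S : Set (Equiv.Perm α)} {s : Set α}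
    (hinv : ∀ g ∈ S, Function.Involutive g) (hs : ∀ g ∈ S, ∀ a ∈ s, g a ∈ s) {a : α}
    (ha : a ∈ s) : MulAction.orbit (Subgroup.closure S) a ⊆ s := by
  rintro _ ⟨⟨g, hg⟩, rfl⟩
  suffices ∀ a, g a ∈ s ↔ a ∈ s from (this a).2 ha
  induction hg using Subgroup.closure_induction with
  | mem g hg => exact fun a => ⟨fun h => hinv g hg a ▸ hs g hg _ h, hs g hg a⟩
  | one => exact fun a => Iff.rfl
  | mul g h _ _ ihg ihh => exact fun a => (ihg (h a)).trans (ihh a)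
  | inv g _ ih => exact fun a => by simpa using (ih (g⁻¹ a)).symm

namespace MulAction

variable {H α : Type*} [Group H] [MulAction H α] [Finite α]

theorem card_eq_sum_ncard_orbit [Fintype (orbitRel.Quotient H α)] :
    Nat.card α = ∑ ω : orbitRel.Quotient H α, ω.orbit.ncard := by
  rw [Nat.card_congr (selfEquivSigmaOrbits' H α), Nat.card_sigma]
  rfl

theorem mul_card_orbitRel_quotient_le {m : ℕ} (hm : ∀ a : α, m ≤ (orbit H a).ncard) :
    m * Nat.card (orbitRel.Quotient H α) ≤ Nat.card α := by
  have := Fintype.ofFinite (orbitRel.Quotient H α)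
  rw [card_eq_sum_ncard_orbit (H := H) (α := α),
    Nat.card_eq_fintype_card (α := orbitRel.Quotient H α), ← Finset.card_univ, mul_comm,
    ← smul_eq_mul]
  refine Finset.card_nsmul_le_sum _ _ _ fun ω _ => ?_
  induction ω using Quotient.inductionOn with
  | h a => simpa using hm a

theorem mul_card_orbitRel_quotient_add_le {m : ℕ} (hm : ∀ a : α, m ≤ (orbit H a).ncard)
    (a₀ : α) :
    m * Nat.card (orbitRel.Quotient H α) + (orbit H a₀).ncard ≤ Nat.card α + m := by
  classical
  have := Fintype.ofFinite (orbitRel.Quotient H α)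
  let ω₀ : orbitRel.Quotient H α := Quotient.mk'' a₀
  have hrest : (Finset.univ.erase ω₀).card * m ≤
      ∑ ω ∈ Finset.univ.erase ω₀, ω.orbit.ncard := by
    rw [← smul_eq_mul]
    refine Finset.card_nsmul_le_sum _ _ _ fun ω _ => ?_
    induction ω using Quotient.inductionOn with
    | h a => simpa using hm a
  have hsplit := Finset.add_sum_erase Finset.univ (fun ω => ω.orbit.ncard) (Finset.mem_univ ω₀)
  have hcard := Finset.card_erase_add_one (Finset.mem_univ ω₀)
  rw [card_eq_sum_ncard_orbit (H := H) (α := α), ← hsplit,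
    Nat.card_eq_fintype_card (α := orbitRel.Quotient H α), ← Finset.card_univ,
    ← hcard]
  simp only [ω₀, orbitRel.Quotient.orbit_mk]
  nlinarith

theorem card_eq_mul_card_orbitRel_quotient {m : ℕ} (hm : ∀ a : α, (orbit H a).ncard = m) :
    Nat.card α = m * Nat.card (orbitRel.Quotient H α) := by
  have := Fintype.ofFinite (orbitRel.Quotient H α)
  rw [card_eq_sum_ncard_orbit (H := H) (α := α),
    Nat.card_eq_fintype_card (α := orbitRel.Quotient H α), ← Finset.card_univ, mul_comm,
    ← smul_eq_mul, ← Finset.sum_const]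
  refine Finset.sum_congr rfl fun ω _ => ?_
  induction ω using Quotient.inductionOn with
  | h a => simpa using hm a

end MulAction

namespace TGraph

theorem bubblePerm_bubblePerm (c : Fin 3) (k : Fin 4) : bubblePerm c (bubblePerm c k) = k := by
  revert c k; decide

theorem bubblePerm_ne (c : Fin 3) (k : Fin 4) : bubblePerm c k ≠ k := by
  revert c k; decide

theorem exists_bubblePerm_eq {k l : Fin 4} (h : k ≠ l) : ∃ c, bubblePerm c k = l := by
  revert k l; decide

theorem eq_or_bubblePerm {c₀ c : Fin 3} (hc : c ≠ c₀) (k l : Fin 4) :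
    l = k ∨ l = bubblePerm c₀ k ∨ l = bubblePerm c k ∨ l = bubblePerm c (bubblePerm c₀ k) := by
  revert c₀ c k l; decide

variable {G H : TGraph} {c c₀ c₁ : Fin 3} {u x z : G.V}

theorem colPerm_apply (c : Fin 3) (v : G.V) :
    G.colPerm c v = (v.1, bubblePerm c v.2) := rfl

@[simp] theorem fst_colPerm (c : Fin 3) (v : G.V) : (G.colPerm c v).1 = v.1 := rfl

@[simp] theorem pairing_pairing (v : G.V) : G.pairing (G.pairing v) = v := G.invol v

@[simp] theorem colPerm_colPerm (c : Fin 3) (v : G.V) : G.colPerm c (G.colPerm c v) = v := by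
  simp [colPerm_apply, bubblePerm_bubblePerm]

theorem colPerm_ne (c : Fin 3) (v : G.V) : G.colPerm c v ≠ v := fun h =>
  bubblePerm_ne c v.2 (congrArg Prod.snd h)

theorem exists_pairing_eq_colPerm {v : G.V} (h : (G.pairing v).1 = v.1) :
    ∃ c, G.pairing v = G.colPerm c v := by
  have hne : v.2 ≠ (G.pairing v).2 := fun h2 => G.fixfree v (Prod.ext h h2.symm)
  obtain ⟨c, hc⟩ := exists_bubblePerm_eq hne
  exact ⟨c, Prod.ext h hc.symm⟩

theorem pairing_ne_colPerm {v : G.V} (h : (G.pairing v).1 ≠ v.1) (c : Fin 3) :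
    G.pairing v ≠ G.colPerm c v := fun h2 => h (by rw [h2, fst_colPerm])

theorem FaceLen2.pairing_colPerm {v : G.V} (h : G.FaceLen2 c v) :
    G.pairing (G.colPerm c v) = G.colPerm c (G.pairing v) := by
  rw [← h.2, pairing_pairing]

abbrev faceOrbit (G : TGraph) (c : Fin 3) (v : G.V) : Set G.V :=
  MulAction.orbit (G.faceGroup c) v

theorem mem_faceOrbit_self (c : Fin 3) (v : G.V) : v ∈ G.faceOrbit c v :=
  MulAction.mem_orbit_self v

theorem pairing_mem_faceOrbit {v w : G.V} (hw : w ∈ G.faceOrbit c v) :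
    G.pairing w ∈ G.faceOrbit c v := by
  obtain ⟨g, rfl⟩ := hw
  exact ⟨⟨G.pairing, Subgroup.subset_closure (by simp)⟩ * g, rfl⟩

theorem colPerm_mem_faceOrbit {v w : G.V} (hw : w ∈ G.faceOrbit c v) :
    G.colPerm c w ∈ G.faceOrbit c v := by
  obtain ⟨g, rfl⟩ := hw
  exact ⟨⟨G.colPerm c, Subgroup.subset_closure (by simp)⟩ * g, rfl⟩

theorem faceOrbit_subset {s : Set G.V} (hp : ∀ w ∈ s, G.pairing w ∈ s)
    (hc : ∀ w ∈ s, G.colPerm c w ∈ s) {v : G.V} (hv : v ∈ s) : G.faceOrbit c v ⊆ s := by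
  refine Equiv.Perm.orbit_closure_subset ?_ ?_ hv
  · rintro g (rfl | rfl) w
    exacts [pairing_pairing w, colPerm_colPerm c w]
  · rintro g (rfl | rfl)
    exacts [hp, hc]

theorem two_le_ncard_faceOrbit (c : Fin 3) (v : G.V) : 2 ≤ (G.faceOrbit c v).ncard := by
  have hv := mem_faceOrbit_self c v
  calc 2 = ({v, G.pairing v} : Set G.V).ncard := (Set.ncard_pair (G.fixfree v).symm).symm
    _ ≤ _ := Set.ncard_le_ncard
      (Set.insert_subset hv (Set.singleton_subset_iff.2 (pairing_mem_faceOrbit hv)))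

/-- The vertices of the face of color `c` through `v` if that face has length 2. -/
def faceSquare (G : TGraph) (c : Fin 3) (v : G.V) : Set G.V :=
  {v, G.pairing v, G.colPerm c v, G.colPerm c (G.pairing v)}

theorem faceSquare_subset_faceOrbit (c : Fin 3) (v : G.V) :
    G.faceSquare c v ⊆ G.faceOrbit c v := by
  have hv := mem_faceOrbit_self c v
  simp only [faceSquare, Set.insert_subset_iff, Set.singleton_subset_iff]
  exact ⟨hv, pairing_mem_faceOrbit hv, colPerm_mem_faceOrbit hv,
    colPerm_mem_faceOrbit (pairing_mem_faceOrbit hv)⟩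

theorem ncard_faceSquare {v : G.V} (h : G.pairing v ≠ G.colPerm c v) :
    (G.faceSquare c v).ncard = 4 := by
  have h1 := G.fixfree v
  have h2 := colPerm_ne c v
  have h3 := colPerm_ne c (G.pairing v)
  have h4 : G.colPerm c (G.pairing v) ≠ v := fun e =>
    h (by rw [← colPerm_colPerm c (G.pairing v), e])
  have h5 : G.colPerm c (G.pairing v) ≠ G.colPerm c v := fun e => h1 ((G.colPerm c).injective e)
  rw [faceSquare, Set.ncard_insert_of_notMem, Set.ncard_insert_of_notMem, Set.ncard_pair h5.symm]
  · simp only [Set.mem_insert_iff, Set.mem_singleton_iff, not_or]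
    exact ⟨h, h3.symm⟩
  · simp only [Set.mem_insert_iff, Set.mem_singleton_iff, not_or]
    exact ⟨h1.symm, h2.symm, h4.symm⟩

theorem faceOrbit_subset_faceSquare {v : G.V} (h : G.FaceLen2 c v) :
    G.faceOrbit c v ⊆ G.faceSquare c v := by
  refine faceOrbit_subset ?_ ?_ (by simp [faceSquare])
  · simp only [faceSquare, Set.mem_insert_iff, Set.mem_singleton_iff]
    rintro w (rfl | rfl | rfl | rfl) <;> simp [h.pairing_colPerm, h.2]
  · simp only [faceSquare, Set.mem_insert_iff, Set.mem_singleton_iff]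
    rintro w (rfl | rfl | rfl | rfl) <;> simp

theorem four_le_ncard_faceOrbit {v : G.V} (h : G.pairing v ≠ G.colPerm c v) :
    4 ≤ (G.faceOrbit c v).ncard :=
  ncard_faceSquare h ▸ Set.ncard_le_ncard (faceSquare_subset_faceOrbit c v)

theorem five_le_ncard_faceOrbit {v : G.V} (h : G.pairing v ≠ G.colPerm c v)
    (h' : G.pairing (G.colPerm c (G.pairing v)) ≠ G.colPerm c v) :
    5 ≤ (G.faceOrbit c v).ncard := by
  have hw : G.pairing (G.colPerm c (G.pairing v)) ∉ G.faceSquare c v := by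
    simp only [faceSquare, Set.mem_insert_iff, Set.mem_singleton_iff, not_or]
    refine ⟨fun e => colPerm_ne c (G.pairing v)
      (G.pairing.injective (e.trans (pairing_pairing v).symm)), fun e => h ?_, h', G.fixfree _⟩
    calc G.pairing v = G.colPerm c (G.colPerm c (G.pairing v)) := (colPerm_colPerm c _).symm
      _ = G.colPerm c v := by rw [G.pairing.injective e]
  have hmem : G.pairing (G.colPerm c (G.pairing v)) ∈ G.faceOrbit c v :=
    pairing_mem_faceOrbit (colPerm_mem_faceOrbit (pairing_mem_faceOrbit (mem_faceOrbit_self c v)))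
  calc 5 = (insert (G.pairing (G.colPerm c (G.pairing v))) (G.faceSquare c v)).ncard := by
        rw [Set.ncard_insert_of_notMem hw, ncard_faceSquare h]
    _ ≤ _ := Set.ncard_le_ncard (Set.insert_subset hmem (faceSquare_subset_faceOrbit c v))

theorem ncard_faceOrbit_le_two {v : G.V} (h : G.pairing v = G.colPerm c v) :
    (G.faceOrbit c v).ncard ≤ 2 := by
  refine (Set.ncard_le_ncard (faceOrbit_subset (s := {v, G.pairing v}) ?_ ?_ (by simp))).trans
    (Set.ncard_insert_le _ _ |>.trans (by simp))
  · simp only [Set.mem_insert_iff, Set.mem_singleton_iff]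
    rintro w (rfl | rfl) <;> simp
  · simp only [Set.mem_insert_iff, Set.mem_singleton_iff]
    rintro w (rfl | rfl) <;> simp [h]

theorem ncard_faceOrbit_eq_four_iff {v : G.V} :
    (G.faceOrbit c v).ncard = 4 ↔ G.FaceLen2 c v := by
  refine ⟨fun h4 => ?_, fun h => le_antisymm ?_ (four_le_ncard_faceOrbit h.1)⟩
  · by_cases h : G.pairing v = G.colPerm c v
    · have := ncard_faceOrbit_le_two h; omega
    by_contra h'
    have := five_le_ncard_faceOrbit h (fun e => h' ⟨h, e⟩)
    omega
  · exact (Set.ncard_le_ncard (faceOrbit_subset_faceSquare h)).trans (ncard_faceSquare h.1).le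

theorem card_V (G : TGraph) : Nat.card G.V = 4 * G.b := by
  rw [Nat.card_prod, Nat.card_eq_fintype_card (α := G.B), Nat.card_eq_fintype_card (α := Fin 4),
    Fintype.card_fin, b, mul_comm]

theorem numFaces_le_b (h : ∀ v, G.pairing v ≠ G.colPerm c v) : G.numFaces c ≤ G.b := by
  have := MulAction.mul_card_orbitRel_quotient_le fun v => four_le_ncard_faceOrbit (h v)
  rw [card_V] at this
  exact Nat.le_of_mul_le_mul_left this (by norm_num)

theorem faceLen2_of_numFaces_eq_b (h : ∀ v, G.pairing v ≠ G.colPerm c v)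
    (hn : G.numFaces c = G.b) (v : G.V) : G.FaceLen2 c v := by
  have h4 := four_le_ncard_faceOrbit (h v)
  have := MulAction.mul_card_orbitRel_quotient_add_le (fun w => four_le_ncard_faceOrbit (h w)) v
  rw [card_V, ← numFaces, hn] at this
  refine ncard_faceOrbit_eq_four_iff.1 ?_
  dsimp only [faceOrbit] at h4 ⊢
  omega

theorem numFaces_eq_b (h : ∀ v, G.FaceLen2 c v) : G.numFaces c = G.b := by
  have := MulAction.card_eq_mul_card_orbitRel_quotient fun v =>
    ncard_faceOrbit_eq_four_iff.2 (h v)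
  rw [card_V, ← numFaces] at this
  omega

theorem F_le_three_mul_b (h : ∀ c v, G.pairing v ≠ G.colPerm c v) : G.F ≤ 3 * G.b :=
  calc G.F ≤ ∑ _c : Fin 3, G.b := Finset.sum_le_sum fun c _ => numFaces_le_b (h c)
    _ = 3 * G.b := by simp

theorem faceLen2_of_F_eq_three_mul_b (h : ∀ c v, G.pairing v ≠ G.colPerm c v)
    (hF : G.F = 3 * G.b) (c : Fin 3) (v : G.V) : G.FaceLen2 c v := by
  have hsum : ∑ c : Fin 3, G.numFaces c = ∑ _c : Fin 3, G.b := by simpa [F] using hF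
  exact faceLen2_of_numFaces_eq_b (h c) ((Finset.sum_eq_sum_iff_of_le fun c _ =>
    numFaces_le_b (h c)).1 hsum c (Finset.mem_univ c)) v

theorem F_eq_three_mul_b (h : ∀ c v, G.FaceLen2 c v) : G.F = 3 * G.b := by
  rw [F, Finset.sum_congr rfl fun c _ => numFaces_eq_b (h c)]
  simp

theorem eq_of_ne_of_ne (hb : G.b = 2) {β β₁ β₂ : G.B} (h₁ : β₁ ≠ β) (h₂ : β₂ ≠ β) :
    β₁ = β₂ :=
  ((Nat.card_eq_two_iff' β).1 (Nat.card_eq_fintype_card.trans hb)).unique h₁ h₂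

theorem exists_fst_pairing_ne (hG : G.Connected) {β β' : G.B} (hne : β' ≠ β) :
    ∃ z : G.V, z.1 = β ∧ (G.pairing z).1 ≠ β := by
  by_contra! h
  have hsub : MulAction.orbit G.fullGroup ((β, 0) : G.V) ⊆ {w | w.1 = β} := by
    refine Equiv.Perm.orbit_closure_subset ?_ ?_ rfl
    · rintro g (rfl | ⟨c, rfl⟩) w
      exacts [pairing_pairing w, colPerm_colPerm c w]
    · rintro g (rfl | ⟨c, rfl⟩) w hw
      exacts [h w hw, hw]
  exact hne (hsub (hG (β', 0) (β, 0)))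

theorem exists_fst_pairing_eq (hb : G.b = 2) (hu : (G.pairing u).1 = u.1) {β : G.B}
    (hβ : β ≠ u.1) : ∃ x : G.V, x.1 = β ∧ (G.pairing x).1 = β := by
  by_contra! h
  have hfst : ∀ k, (G.pairing (β, k)).1 = u.1 := fun k => eq_of_ne_of_ne hb (h (β, k) rfl) hβ.symm
  have hinj : Function.Injective fun k => (G.pairing (β, k)).2 := fun k l e =>
    congrArg Prod.snd (G.pairing.injective (Prod.ext ((hfst k).trans (hfst l).symm) e))
  obtain ⟨k, hk⟩ := Finite.injective_iff_surjective.1 hinj u.2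
  have hpk : G.pairing (β, k) = u := Prod.ext (hfst k) hk
  exact hβ (by rw [← hu, ← hpk, pairing_pairing])

theorem ncard_bubble (β : G.B) : {w : G.V | w.1 = β}.ncard = 4 := by
  have : {w : G.V | w.1 = β} = Set.range (Prod.mk β) := by
    ext ⟨β', k⟩
    simp [eq_comm]
  rw [this, Set.ncard_range_of_injective (Prod.mk_right_injective β), Nat.card_eq_fintype_card,
    Fintype.card_fin]

theorem bubble_subset_faceOrbit (hu : G.pairing u = G.colPerm c₀ u) (hc : c ≠ c₀) :
    {w : G.V | w.1 = u.1} ⊆ G.faceOrbit c u := by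
  rintro ⟨β, k⟩ (rfl : β = u.1)
  have hp := pairing_mem_faceOrbit (mem_faceOrbit_self c u)
  rw [hu] at hp
  rcases eq_or_bubblePerm hc u.2 k with rfl | rfl | rfl | rfl
  · exact mem_faceOrbit_self c u
  · exact hp
  · exact colPerm_mem_faceOrbit (mem_faceOrbit_self c u)
  · exact colPerm_mem_faceOrbit hp

theorem five_le_ncard_faceOrbit_of_internal (hu : G.pairing u = G.colPerm c₀ u) (hc : c ≠ c₀)
    (hz : z.1 = u.1) (hpz : (G.pairing z).1 ≠ u.1) : 5 ≤ (G.faceOrbit c u).ncard := by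
  have hsub := bubble_subset_faceOrbit hu hc
  calc 5 = (insert (G.pairing z) {w : G.V | w.1 = u.1}).ncard := by
        rw [Set.ncard_insert_of_notMem (show G.pairing z ∉ {w : G.V | w.1 = u.1} from hpz),
          ncard_bubble]
    _ ≤ _ := Set.ncard_le_ncard (Set.insert_subset (pairing_mem_faceOrbit (hsub hz)) hsub)

theorem two_mul_numFaces_add_ncard_faceOrbit_le (c : Fin 3) (v : G.V) :
    2 * G.numFaces c + (G.faceOrbit c v).ncard ≤ 4 * G.b + 2 := by
  rw [← card_V]
  exact MulAction.mul_card_orbitRel_quotient_add_le (two_le_ncard_faceOrbit c) v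

theorem faceOrbit_eq_univ (hb : G.b = 2) (hu : G.pairing u = G.colPerm c₀ u)
    (hx : G.pairing x = G.colPerm c₁ x) (hux : x.1 ≠ u.1) (hz : z.1 = u.1)
    (hpz : (G.pairing z).1 ≠ u.1) (h₀ : c ≠ c₀) (h₁ : c ≠ c₁) : G.faceOrbit c u = Set.univ := by
  have hpzx : (G.pairing z).1 = x.1 := eq_of_ne_of_ne hb hpz hux
  have hpzu : G.pairing z ∈ G.faceOrbit c u :=
    pairing_mem_faceOrbit (bubble_subset_faceOrbit hu h₀ hz)
  have hxu : G.faceOrbit c x = G.faceOrbit c u :=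
    (MulAction.orbit_eq_iff.2 (bubble_subset_faceOrbit hx h₁ hpzx)).symm.trans
      (MulAction.orbit_eq_iff.2 hpzu)
  refine Set.eq_univ_of_forall fun w => ?_
  by_cases hw : w.1 = u.1
  · exact bubble_subset_faceOrbit hu h₀ hw
  · exact hxu ▸ bubble_subset_faceOrbit hx h₁ (eq_of_ne_of_ne hb hw hux)

theorem numFaces_le_of_internal (hb : G.b = 2) (hu : G.pairing u = G.colPerm c₀ u)
    (hx : G.pairing x = G.colPerm c₁ x) (hux : x.1 ≠ u.1) (hz : z.1 = u.1)
    (hpz : (G.pairing z).1 ≠ u.1) (c : Fin 3) :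
    G.numFaces c ≤ 1 + (if c = c₀ then 1 else 0) + (if c = c₁ then 1 else 0) := by
  split_ifs with h₀ h₁ h₁
  · have := two_mul_numFaces_add_ncard_faceOrbit_le c z
    have := four_le_ncard_faceOrbit (c := c) (pairing_ne_colPerm (hz ▸ hpz) c)
    omega
  · have hpzx : (G.pairing z).1 = x.1 := eq_of_ne_of_ne hb hpz hux
    have := two_mul_numFaces_add_ncard_faceOrbit_le c x
    have := five_le_ncard_faceOrbit_of_internal hx h₁ hpzx
      (by rw [pairing_pairing, hz]; exact hux.symm)
    omega
  · have := two_mul_numFaces_add_ncard_faceOrbit_le c u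
    have := five_le_ncard_faceOrbit_of_internal hu h₀ hz hpz
    omega
  · have := two_mul_numFaces_add_ncard_faceOrbit_le c u
    rw [faceOrbit_eq_univ hb hu hx hux hz hpz h₀ h₁, Set.ncard_univ, card_V] at this
    omega

theorem F_le_five (hb : G.b = 2) (hG : G.Connected) (hu : (G.pairing u).1 = u.1) : G.F ≤ 5 := by
  obtain ⟨c₀, hc₀⟩ := exists_pairing_eq_colPerm hu
  obtain ⟨β, hβ⟩ := ((Nat.card_eq_two_iff' u.1).1 (Nat.card_eq_fintype_card.trans hb)).exists
  obtain ⟨x, hxβ, hpx⟩ := exists_fst_pairing_eq hb hu hβ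
  obtain ⟨c₁, hc₁⟩ := exists_pairing_eq_colPerm (hpx.trans hxβ.symm)
  obtain ⟨z, hz, hpz⟩ := exists_fst_pairing_ne hG hβ
  calc G.F ≤ ∑ c : Fin 3, (1 + (if c = c₀ then 1 else 0) + (if c = c₁ then 1 else 0)) :=
        Finset.sum_le_sum fun c _ => numFaces_le_of_internal hb hc₀ hc₁ (hxβ ▸ hβ) hz hpz c
    _ = 5 := by fin_cases c₀ <;> fin_cases c₁ <;> rfl

theorem fst_pairing_ne_of_faceLen2 {v : G.V} (h : ∀ c, G.FaceLen2 c v) :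
    (G.pairing v).1 ≠ v.1 := fun e =>
  let ⟨c, hc⟩ := exists_pairing_eq_colPerm e
  (h c).1 hc

theorem isIso_G2_of_faceLen2 (hb : G.b = 2) (h : ∀ c v, G.FaceLen2 c v) : IsIso G G2 := by
  have hcross : ∀ v : G.V, (G.pairing v).1 ≠ v.1 := fun v =>
    fst_pairing_ne_of_faceLen2 fun c => h c v
  let e : G.B ≃ Fin 2 := Fintype.equivFinOfCardEq hb
  let ψ : G.V → Fin 2 × Fin 4 := fun v => (e v.1, if e v.1 = 0 then v.2 else (G.pairing v).2)
  have hinj : Function.Injective ψ := by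
    intro v w hvw
    obtain ⟨h1, h2⟩ := Prod.mk.inj hvw
    have h1' : v.1 = w.1 := e.injective h1
    rw [← h1] at h2
    split_ifs at h2
    · exact Prod.ext h1' h2
    · refine G.pairing.injective (Prod.ext (eq_of_ne_of_ne hb (hcross v) ?_) h2)
      rw [h1']
      exact hcross w
  have hbij := hinj.bijective_of_nat_card_le (by rw [card_V, hb]; simp)
  refine ⟨⟨Equiv.ofBijective ψ hbij, fun v => ?_, fun c v => ?_⟩⟩
  · have hne : e (G.pairing v).1 ≠ e v.1 := e.injective.ne (hcross v)
    change ψ (G.pairing v) = (Equiv.swap 0 1 (ψ v).1, (ψ v).2)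
    simp only [ψ, pairing_pairing]
    generalize e (G.pairing v).1 = a' at hne ⊢
    generalize e v.1 = a at hne ⊢
    fin_cases a <;> fin_cases a' <;> simp_all
  · change ψ (G.colPerm c v) = ((ψ v).1, bubblePerm c (ψ v).2)
    simp only [ψ, fst_colPerm]
    rw [(h c v).pairing_colPerm]
    by_cases h0 : e v.1 = 0 <;> simp [h0, colPerm_apply]

theorem Iso.faceLen2 (φ : Iso G H) (h : ∀ c v, H.FaceLen2 c v) (c : Fin 3) (v : G.V) :
    G.FaceLen2 c v := by
  obtain ⟨h1, h2⟩ := h c (φ.toEquiv v)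
  refine ⟨fun e => h1 ?_, φ.toEquiv.injective ?_⟩
  · rw [← φ.map_pairing, ← φ.map_col, e]
  · rw [φ.map_pairing, φ.map_col, φ.map_pairing, φ.map_col, h2]

theorem mem_orbit_fullGroup_of_fst_eq {u v : G.V} (h : u.1 = v.1) :
    u ∈ MulAction.orbit G.fullGroup v := by
  by_cases h2 : v.2 = u.2
  · rw [show u = v from Prod.ext h h2.symm]
    exact MulAction.mem_orbit_self v
  · obtain ⟨c, hc⟩ := exists_bubblePerm_eq h2
    exact ⟨⟨G.colPerm c, Subgroup.subset_closure (Or.inr ⟨c, rfl⟩)⟩, Prod.ext h.symm hc⟩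

theorem F_le_six (hb : G.b = 2) (hG : G.Connected) : G.F ≤ 6 := by
  by_cases hint : ∃ u : G.V, (G.pairing u).1 = u.1
  · obtain ⟨u, hu⟩ := hint
    exact (F_le_five hb hG hu).trans (by norm_num)
  · have := F_le_three_mul_b fun c v => pairing_ne_colPerm (fun e => hint ⟨v, e⟩) c
    rwa [hb] at this

theorem isIso_G2_of_F_eq_six (hb : G.b = 2) (hG : G.Connected) (hF : G.F = 6) : IsIso G G2 := by
  by_cases hint : ∃ u : G.V, (G.pairing u).1 = u.1
  · obtain ⟨u, hu⟩ := hint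
    have := F_le_five hb hG hu
    omega
  · exact isIso_G2_of_faceLen2 hb (faceLen2_of_F_eq_three_mul_b
      (fun c v => pairing_ne_colPerm (fun e => hint ⟨v, e⟩) c) (by rw [hF, hb]))

end TGraph

theorem G2_faceLen2 : ∀ c v, G2.FaceLen2 c v := by
  unfold TGraph.FaceLen2
  decide

theorem G2_b : G2.b = 2 := rfl

theorem G2_F : G2.F = 6 := by
  rw [TGraph.F_eq_three_mul_b G2_faceLen2, G2_b]

theorem G2_connected : G2.Connected := by
  intro u v
  by_cases h : u.1 = v.1
  · exact TGraph.mem_orbit_fullGroup_of_fst_eq h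
  have hpv : G2.pairing v ∈ MulAction.orbit G2.fullGroup v :=
    ⟨⟨G2.pairing, Subgroup.subset_closure (Or.inl rfl)⟩, rfl⟩
  rw [← MulAction.orbit_eq_iff.2 hpv]
  exact TGraph.mem_orbit_fullGroup_of_fst_eq (TGraph.eq_of_ne_of_ne G2_b h
    (TGraph.fst_pairing_ne_of_faceLen2 fun c => G2_faceLen2 c v))

/-- The unique connected graph of the tetrahedral model with
two bubbles maximizing the number of faces is `G_2` (up to color-preserving
isomorphism), and `F(G_2) = 6`. -/
theorem G2_unique_maximizer :
    G2.F = 6 ∧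
      ∀ G : TGraph, G.Connected → G.b = 2 →
        (G.MaximizesFaces ↔ IsIso G G2) := by
  refine ⟨G2_F, fun G hG hb => ⟨fun hmax => ?_, fun ⟨φ⟩ => ⟨hG, fun H hH hHb => ?_⟩⟩⟩
  · have hge : 6 ≤ G.F := G2_F ▸ hmax.2 G2 G2_connected (G2_b.trans hb.symm)
    exact TGraph.isIso_G2_of_F_eq_six hb hG (le_antisymm (TGraph.F_le_six hb hG) hge)
  · rw [TGraph.F_eq_three_mul_b (φ.faceLen2 G2_faceLen2), hb]
    exact TGraph.F_le_six (hHb.trans hb) hH
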